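/- arXiv:1701.06727 — 3 statements merged into one kernel-verified Lean document; each statement's English description precedes it below -/
import Mathlib

section
/- Lagrange-type identity (2.1): for all sequences x, y : ℕ → ℂ^{2n} and all natural numbers s ≤ k, one has ∑_{t=s}^{k} [ R(y)(t)* · ℒ(x)(t) − (ℒ(y)(t))* · R(x)(t) ] = y(k+1)* J x(k+1) − y(s)* J x(s). -/
open Matrix
open scoped ComplexOrder

noncomputable section

/-- The `2n × 2n` canonical symplectic matrix `J = [[0, -Iₙ],[Iₙ, 0]]`,
with `ℂ^{2n}` modelled as functions on `Fin n ⊕ Fin n`. -/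
def symJ (n : ℕ) : Matrix (Fin n ⊕ Fin n) (Fin n ⊕ Fin n) ℂ :=
  Matrix.fromBlocks 0 (-1) 1 0

/-- The partial right shift `R(y)(t) = (y₁(t+1), y₂(t))`. -/
def Rsh (n : ℕ) (y : ℕ → (Fin n ⊕ Fin n → ℂ)) (t : ℕ) : Fin n ⊕ Fin n → ℂ :=
  Sum.elim (fun i => y (t + 1) (Sum.inl i)) (fun i => y t (Sum.inr i))

/-- The difference expression `ℒ(y)(t) = J·(y(t+1) − y(t)) − P(t)·R(y)(t)`. -/
def Lexpr (n : ℕ) (P : ℕ → Matrix (Fin n ⊕ Fin n) (Fin n ⊕ Fin n) ℂ)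
    (y : ℕ → (Fin n ⊕ Fin n → ℂ)) (t : ℕ) : Fin n ⊕ Fin n → ℂ :=
  (symJ n).mulVec (y (t + 1) - y t) - (P t).mulVec (Rsh n y t)

lemma symJ_mulVec (n : ℕ) (v : Fin n ⊕ Fin n → ℂ) :
    (symJ n).mulVec v =
      Sum.elim (fun i => -v (Sum.inr i)) (fun i => v (Sum.inl i)) := by
  funext j
  cases j with
  | inl i =>
      simp [symJ, Matrix.mulVec, dotProduct, Fintype.sum_sum_type,
        Matrix.fromBlocks, Matrix.one_apply, Finset.sum_ite_eq, neg_mul]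
  | inr i =>
      simp [symJ, Matrix.mulVec, dotProduct, Fintype.sum_sum_type,
        Matrix.fromBlocks, Matrix.one_apply, Finset.sum_ite_eq]

lemma symJ_conjTranspose (n : ℕ) : (symJ n)ᴴ = -symJ n := by
  ext j i
  cases j <;> cases i <;>
    simp [symJ, Matrix.fromBlocks, Matrix.conjTranspose_apply, Matrix.one_apply,
      apply_ite (starRingEnd ℂ), eq_comm]

/-- Per-term identity: each summand telescopes. -/
lemma lagrange_term (n : ℕ) (P : ℕ → Matrix (Fin n ⊕ Fin n) (Fin n ⊕ Fin n) ℂ)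
    (hP : ∀ t, (P t).IsHermitian)
    (x y : ℕ → (Fin n ⊕ Fin n → ℂ)) (t : ℕ) :
    star (Rsh n y t) ⬝ᵥ Lexpr n P x t - star (Lexpr n P y t) ⬝ᵥ Rsh n x t
      = star (y (t + 1)) ⬝ᵥ (symJ n).mulVec (x (t + 1))
        - star (y t) ⬝ᵥ (symJ n).mulVec (x t) := by
  have hPcancel :
      star ((P t).mulVec (Rsh n y t)) ⬝ᵥ Rsh n x t
        = star (Rsh n y t) ⬝ᵥ (P t).mulVec (Rsh n x t) := by
    rw [Matrix.star_mulVec, ← Matrix.dotProduct_mulVec, (hP t).eq]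
  have hJ : star ((symJ n).mulVec (y (t + 1) - y t)) ⬝ᵥ Rsh n x t
      = -(star (y (t + 1)) ⬝ᵥ (symJ n).mulVec (Rsh n x t))
        + star (y t) ⬝ᵥ (symJ n).mulVec (Rsh n x t) := by
    rw [Matrix.star_mulVec, ← Matrix.dotProduct_mulVec, symJ_conjTranspose,
      Matrix.neg_mulVec, dotProduct_neg, star_sub, sub_dotProduct]
    ring
  have expand : star (Rsh n y t) ⬝ᵥ (symJ n).mulVec (x (t + 1) - x t)
      + star (y (t + 1)) ⬝ᵥ (symJ n).mulVec (Rsh n x t)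
      - star (y t) ⬝ᵥ (symJ n).mulVec (Rsh n x t)
      = star (y (t + 1)) ⬝ᵥ (symJ n).mulVec (x (t + 1))
        - star (y t) ⬝ᵥ (symJ n).mulVec (x t) := by
    simp only [symJ_mulVec, dotProduct, Fintype.sum_sum_type, Rsh,
      Sum.elim_inl, Sum.elim_inr, Pi.star_apply, Pi.sub_apply]
    simp only [← Finset.sum_add_distrib, ← Finset.sum_sub_distrib]
    exact Finset.sum_congr rfl fun i _ => by ring
  simp only [Lexpr, dotProduct_sub, sub_dotProduct, star_sub, hPcancel, hJ]
  linear_combination expand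

/-- Lagrange-type identity (2.1). -/
theorem lagrange_identity (n : ℕ) (hn : 0 < n)
    (P W : ℕ → Matrix (Fin n ⊕ Fin n) (Fin n ⊕ Fin n) ℂ)
    (hP : ∀ t, (P t).IsHermitian) (hW : ∀ t, (W t).PosSemidef)
    (x y : ℕ → (Fin n ⊕ Fin n → ℂ)) (s k : ℕ) (hsk : s ≤ k) :
    ∑ t ∈ Finset.Icc s k,
      (star (Rsh n y t) ⬝ᵥ Lexpr n P x t - star (Lexpr n P y t) ⬝ᵥ Rsh n x t)
      = star (y (k + 1)) ⬝ᵥ (symJ n).mulVec (x (k + 1))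
        - star (y s) ⬝ᵥ (symJ n).mulVec (x s) := by
  induction k, hsk using Nat.le_induction with
  | base =>
      simp [lagrange_term n P hP x y s]
  | succ k hk ih =>
      rw [Finset.sum_Icc_succ_top (by omega : s ≤ k + 1), ih,
        lagrange_term n P hP x y (k + 1)]
      ring

end
end

section
/- Verification of the induced regular boundary condition matrices in the limit point case (Section 3, Case 2): let M and N be n×2n complex matrices with rank M = n, M J M* = 0, rank N = n, and N J N* = 0, and let Θ ∈ M_{2n}(ℂ) satisfy Θ* J Θ = J. Define the 2n×2n matrices P := [M; 0_{n×2n}] (M on top of an n×2n zero block) and Q := −[0_{n×2n}; N]·Θ*·J (an n×2n zero block on top of N, multiplied by Θ*J). Then rank (P Q) = 2n (where (P Q) is the 2n×4n matrix obtained by placing P and Q side by side) and P J P* = Q J Q* = 0. -/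
/-!
`[P Q]` is block diagonal with blocks `M` and `-N Θᴴ J`, and `Θᴴ J` is invertible with right
inverse `-Θ J`, so the rank is `rank M + rank N = 2n`. Since `J² = -1` and `Jᴴ = -J`, we have
`(A Θᴴ J) J (A Θᴴ J)ᴴ = A Θᴴ J Θ Aᴴ = A J Aᴴ` for every `A`, so the isotropy of `Q` reduces to
`N J Nᴴ = 0` just as that of `P` reduces to `M J Mᴴ = 0`.
-/

open Matrix

noncomputable section

theorem symJ_eq_J (n : ℕ) : symJ n = J (Fin n) ℂ := rfl

theorem Submodule.finrank_prod {K V W : Type*} [Field K] [AddCommGroup V] [Module K V]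
    [AddCommGroup W] [Module K W] [FiniteDimensional K V] [FiniteDimensional K W]
    (p : Submodule K V) (q : Submodule K W) :
    Module.finrank K (p.prod q) = Module.finrank K p + Module.finrank K q := by
  have hsum := Submodule.finrank_sup_add_finrank_inf_eq
    (p.map (LinearMap.inl K V W)) (q.map (LinearMap.inr K V W))
  rw [(LinearMap.disjoint_inl_inr.mono LinearMap.map_le_range LinearMap.map_le_range).eq_bot,
    finrank_bot, add_zero] at hsum
  rw [LinearMap.prod_eq_sup_map, hsum,
    ← (Submodule.equivMapOfInjective _ LinearMap.inl_injective p).finrank_eq,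
    ← (Submodule.equivMapOfInjective _ LinearMap.inr_injective q).finrank_eq]

namespace Matrix

section Rank

variable {K m n m₁ m₂ n₁ n₂ : Type*} [Field K] [Fintype n] [Fintype n₁] [Fintype n₂]

theorem rank_neg (A : Matrix m n K) : (-A).rank = A.rank := by
  have h : (-A).mulVecLin = -A.mulVecLin := by
    ext v
    simp
  rw [rank, rank, h, LinearMap.range_neg]

theorem rank_fromBlocks_zero_zero [Fintype m₁] [Fintype m₂]
    (A : Matrix m₁ n₁ K) (D : Matrix m₂ n₂ K) :
    (fromBlocks A 0 0 D).rank = A.rank + D.rank := by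
  have h : (fromBlocks A 0 0 D).mulVecLin =
      (LinearEquiv.sumArrowLequivProdArrow m₁ m₂ K K).symm.toLinearMap ∘ₗ
        A.mulVecLin.prodMap D.mulVecLin ∘ₗ
          (LinearEquiv.sumArrowLequivProdArrow n₁ n₂ K K).toLinearMap := by
    ext v i
    cases i <;> simp [fromBlocks_mulVec] <;> rfl
  rw [rank, h, LinearMap.range_comp, LinearMap.range_comp_of_range_eq_top _ (LinearEquiv.range _),
    LinearEquiv.finrank_map_eq, LinearMap.range_prodMap, Submodule.finrank_prod]
  rfl

end Rank

variable {l m n R : Type*} [CommRing R] [StarRing R]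

theorem fromRows_mul_mul_conjTranspose_fromRows {m₁ m₂ : Type*} [Fintype n]
    (A : Matrix m₁ n R) (B : Matrix m₂ n R) (S : Matrix n n R) :
    fromRows A B * S * (fromRows A B)ᴴ =
      fromBlocks (A * S * Aᴴ) (A * S * Bᴴ) (B * S * Aᴴ) (B * S * Bᴴ) := by
  rw [conjTranspose_fromRows_eq_fromCols_conjTranspose, fromRows_mul, fromRows_mul_fromCols]

variable [DecidableEq l]

@[simp]
theorem J_conjTranspose : (J l R)ᴴ = -J l R := by
  simp [J, fromBlocks_conjTranspose, fromBlocks_neg]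

variable [Fintype l] {Θ : Matrix (l ⊕ l) (l ⊕ l) R}

theorem isUnit_det_conjTranspose_mul_J (hΘ : Θᴴ * J l R * Θ = J l R) :
    IsUnit (Θᴴ * J l R).det := by
  refine isUnit_det_of_right_inverse (B := -(Θ * J l R)) ?_
  rw [Matrix.mul_neg, ← Matrix.mul_assoc, hΘ, J_squared, neg_neg]

theorem mul_conjTranspose_mul_J_form (hΘ : Θᴴ * J l R * Θ = J l R) (A : Matrix m (l ⊕ l) R) :
    A * Θᴴ * J l R * J l R * (A * Θᴴ * J l R)ᴴ = A * J l R * Aᴴ := by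
  have hJ : ∀ X : Matrix (l ⊕ l) m R, J l R * (J l R * (-J l R * X)) = J l R * X := by
    intro X
    rw [← Matrix.mul_assoc, J_squared, Matrix.neg_mul, Matrix.one_mul, Matrix.neg_mul, neg_neg]
  simp only [conjTranspose_mul, conjTranspose_conjTranspose, J_conjTranspose, Matrix.mul_assoc]
  rw [hJ, ← Matrix.mul_assoc Θᴴ, ← Matrix.mul_assoc (Θᴴ * J l R), hΘ]

end Matrix

theorem induced_boundary_matrices_lpc_general (n : ℕ)
    (M N : Matrix (Fin n) (Fin n ⊕ Fin n) ℂ)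
    (Θ : Matrix (Fin n ⊕ Fin n) (Fin n ⊕ Fin n) ℂ)
    (hrkM : M.rank = n) (hM : M * symJ n * Mᴴ = 0)
    (hrkN : N.rank = n) (hN : N * symJ n * Nᴴ = 0)
    (hΘ : Θᴴ * symJ n * Θ = symJ n) :
    (Matrix.fromCols (Matrix.fromRows M (0 : Matrix (Fin n) (Fin n ⊕ Fin n) ℂ))
        (-(Matrix.fromRows (0 : Matrix (Fin n) (Fin n ⊕ Fin n) ℂ) N) * Θᴴ * symJ n)).rank
        = 2 * n ∧
      (Matrix.fromRows M (0 : Matrix (Fin n) (Fin n ⊕ Fin n) ℂ)) * symJ n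
          * (Matrix.fromRows M (0 : Matrix (Fin n) (Fin n ⊕ Fin n) ℂ))ᴴ = 0 ∧
      (-(Matrix.fromRows (0 : Matrix (Fin n) (Fin n ⊕ Fin n) ℂ) N) * Θᴴ * symJ n) * symJ n
          * (-(Matrix.fromRows (0 : Matrix (Fin n) (Fin n ⊕ Fin n) ℂ) N) * Θᴴ * symJ n)ᴴ
          = 0 := by
  rw [symJ_eq_J] at *
  have hQ : -fromRows (0 : Matrix (Fin n) _ ℂ) N * Θᴴ * J (Fin n) ℂ =
      fromRows 0 (-(N * (Θᴴ * J (Fin n) ℂ))) := by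
    rw [Matrix.mul_assoc, Matrix.neg_mul, fromRows_mul, Matrix.zero_mul, fromRows_neg, neg_zero]
  refine ⟨?rank, ?isotropicP, ?isotropicQ⟩
  case rank =>
    rw [hQ, fromCols_fromRows_eq_fromBlocks, rank_fromBlocks_zero_zero, rank_neg,
      rank_mul_eq_left_of_isUnit_det _ _ (isUnit_det_conjTranspose_mul_J hΘ), hrkM, hrkN, two_mul]
  case isotropicP =>
    rw [fromRows_mul_mul_conjTranspose_fromRows, hM]
    simp
  case isotropicQ =>
    rw [mul_conjTranspose_mul_J_form hΘ, Matrix.neg_mul, conjTranspose_neg, Matrix.neg_mul,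
      Matrix.mul_neg, neg_neg, fromRows_mul_mul_conjTranspose_fromRows, hN]
    simp

/-- Verification of the induced regular boundary condition matrices in the limit
point case (Section 3, Case 2). -/
theorem induced_boundary_matrices_lpc (n : ℕ) (hn : 0 < n)
    (M N : Matrix (Fin n) (Fin n ⊕ Fin n) ℂ)
    (Θ : Matrix (Fin n ⊕ Fin n) (Fin n ⊕ Fin n) ℂ)
    (hrkM : M.rank = n) (hM : M * symJ n * Mᴴ = 0)
    (hrkN : N.rank = n) (hN : N * symJ n * Nᴴ = 0)
    (hΘ : Θᴴ * symJ n * Θ = symJ n) :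
    (Matrix.fromCols (Matrix.fromRows M (0 : Matrix (Fin n) (Fin n ⊕ Fin n) ℂ))
        (-(Matrix.fromRows (0 : Matrix (Fin n) (Fin n ⊕ Fin n) ℂ) N) * Θᴴ * symJ n)).rank
        = 2 * n ∧
      (Matrix.fromRows M (0 : Matrix (Fin n) (Fin n ⊕ Fin n) ℂ)) * symJ n
          * (Matrix.fromRows M (0 : Matrix (Fin n) (Fin n ⊕ Fin n) ℂ))ᴴ = 0 ∧
      (-(Matrix.fromRows (0 : Matrix (Fin n) (Fin n ⊕ Fin n) ℂ) N) * Θᴴ * symJ n) * symJ n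
          * (-(Matrix.fromRows (0 : Matrix (Fin n) (Fin n ⊕ Fin n) ℂ) N) * Θᴴ * symJ n)ᴴ
          = 0 :=
  induced_boundary_matrices_lpc_general n M N Θ hrkM hM hrkN hN hΘ

end
end

section
/- Weighted Frobenius-norm summability bound (inequality (5.22) in the proof of Theorem 5.2): let W : ℕ → M_{2n}(ℂ) be a sequence of positive semidefinite matrices, m ≥ 1 an integer, α ≥ 0, and φ₁, …, φ_m : ℕ → ℂ^{2n} sequences such that ∑_{t=0}^{∞} φ_i(t)* W(t) φ_i(t) ≤ α² for each i = 1, …, m. Let Φ(t) denote the 2n×m matrix whose i-th column is φ_i(t). Then ∑_{t=0}^{∞} ‖Φ(t)* W(t) Φ(t)‖_F ≤ m·α², where ‖·‖_F denotes the Frobenius norm (square root of the sum of squared moduli of the entries). -/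
open Matrix
open scoped ComplexOrder

noncomputable section

/-- The Frobenius norm of a complex matrix: the square root of the sum of the
squared moduli of its entries. -/
def frobNorm {I J : Type*} [Fintype I] [Fintype J] (M : Matrix I J ℂ) : ℝ :=
  Real.sqrt (∑ i, ∑ j, ‖M i j‖ ^ 2)

/-- The `2n × m` matrix whose `i`-th column is `φᵢ(t)`. -/
def colMatrix (n m : ℕ) (φ : Fin m → ℕ → (Fin n ⊕ Fin n → ℂ)) (t : ℕ) :
    Matrix (Fin n ⊕ Fin n) (Fin m) ℂ :=
  Matrix.of fun i j => φ j t i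

/-!
`P = Φ(t)* W(t) Φ(t)` is positive semidefinite, and for such a matrix Cauchy–Schwarz for the
semi-inner product `xᴴ P y` gives `|P i j|² ≤ P i i · P j j`; summing over `i, j` yields
`‖P‖_F ≤ tr P`. Since `tr (Φ* W Φ) = ∑ᵢ φᵢ* W φᵢ`, the series is dominated termwise by the sum
of the `m` given series, each of total at most `α²`.
-/

namespace Matrix

variable {n m 𝕜 : Type*} [Fintype n] [RCLike 𝕜]

theorem PosSemidef.norm_apply_sq_le {P : Matrix n n 𝕜} (hP : P.PosSemidef) (i j : n) :
    ‖P i j‖ ^ 2 ≤ RCLike.re (P i i) * RCLike.re (P j j) := by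
  classical
  let _ := P.toSeminormedAddCommGroup hP
  let _ := P.toInnerProductSpace hP
  have inner_single : ∀ k l, (inner 𝕜 (Pi.single k 1 : n → 𝕜) (Pi.single l 1) : 𝕜) = P k l := by
    intro k l
    change (P *ᵥ Pi.single l 1) ⬝ᵥ star (Pi.single k 1) = P k l
    simp
  have h := inner_mul_inner_self_le (𝕜 := 𝕜) (Pi.single i 1 : n → 𝕜) (Pi.single j 1)
  rwa [inner_single, inner_single, inner_single, inner_single, ← hP.isHermitian.apply j i,
    norm_star, ← sq] at h

theorem trace_conjTranspose_mul_mul {R : Type*} [Fintype m] [CommSemiring R] [StarRing R]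
    (A : Matrix n n R) (B : Matrix n m R) :
    (Bᴴ * A * B).trace = ∑ j, star (Bᵀ j) ⬝ᵥ A *ᵥ Bᵀ j := by
  rw [Matrix.mul_assoc]; rfl

end Matrix

theorem frobNorm_le_re_trace {I : Type*} [Fintype I] {P : Matrix I I ℂ} (hP : P.PosSemidef) :
    frobNorm P ≤ P.trace.re := by
  have trace_re_eq : P.trace.re = ∑ i, (P i i).re := Complex.re_sum _ _
  have sum_sq_le : ∑ i, ∑ j, ‖P i j‖ ^ 2 ≤ P.trace.re ^ 2 :=
    calc ∑ i, ∑ j, ‖P i j‖ ^ 2 ≤ ∑ i, ∑ j, (P i i).re * (P j j).re := by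
          gcongr with i _ j _; exact hP.norm_apply_sq_le i j
      _ = P.trace.re ^ 2 := by rw [trace_re_eq, sq, Finset.sum_mul_sum]
  exact Real.sqrt_le_iff.mpr ⟨(Complex.le_def.mp hP.trace_nonneg).1, sum_sq_le⟩

theorem weighted_frobenius_summability_general (n m : ℕ)
    (W : ℕ → Matrix (Fin n ⊕ Fin n) (Fin n ⊕ Fin n) ℂ)
    (hW : ∀ t, (W t).PosSemidef)
    (α : ℝ)
    (φ : Fin m → ℕ → (Fin n ⊕ Fin n → ℂ))
    (hsum : ∀ i : Fin m,
      Summable (fun t => (star (φ i t) ⬝ᵥ (W t).mulVec (φ i t)).re) ∧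
      ∑' t : ℕ, (star (φ i t) ⬝ᵥ (W t).mulVec (φ i t)).re ≤ α ^ 2) :
    Summable (fun t => frobNorm ((colMatrix n m φ t)ᴴ * W t * colMatrix n m φ t)) ∧
    ∑' t : ℕ, frobNorm ((colMatrix n m φ t)ᴴ * W t * colMatrix n m φ t)
      ≤ m * α ^ 2 := by
  set q : Fin m → ℕ → ℝ := fun i t => (star (φ i t) ⬝ᵥ (W t).mulVec (φ i t)).re
  have frobNorm_le : ∀ t, frobNorm ((colMatrix n m φ t)ᴴ * W t * colMatrix n m φ t)
      ≤ ∑ i, q i t := fun t => by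
    have h := frobNorm_le_re_trace ((hW t).conjTranspose_mul_mul_same (colMatrix n m φ t))
    rw [trace_conjTranspose_mul_mul, Complex.re_sum] at h
    exact h
  have q_summable : Summable fun t => ∑ i, q i t := summable_sum fun i _ => (hsum i).1
  have frobNorm_summable :=
    Summable.of_nonneg_of_le (fun t => Real.sqrt_nonneg _) frobNorm_le q_summable
  refine ⟨frobNorm_summable, ?_⟩
  calc _ ≤ ∑' t, ∑ i, q i t := frobNorm_summable.tsum_le_tsum frobNorm_le q_summable
    _ = ∑ i, ∑' t, q i t := Summable.tsum_finsetSum fun i _ => (hsum i).1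
    _ ≤ ∑ _i : Fin m, α ^ 2 := Finset.sum_le_sum fun i _ => (hsum i).2
    _ = m * α ^ 2 := by simp

/-- Weighted Frobenius-norm summability bound (inequality (5.22)): if each column
`φᵢ` satisfies `∑_t φᵢ(t)* W(t) φᵢ(t) ≤ α²`, then
`∑_t ‖Φ(t)* W(t) Φ(t)‖_F ≤ m α²`. -/
theorem weighted_frobenius_summability (n m : ℕ) (hn : 0 < n) (hm : 1 ≤ m)
    (W : ℕ → Matrix (Fin n ⊕ Fin n) (Fin n ⊕ Fin n) ℂ)
    (hW : ∀ t, (W t).PosSemidef)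
    (α : ℝ) (hα : 0 ≤ α)
    (φ : Fin m → ℕ → (Fin n ⊕ Fin n → ℂ))
    (hsum : ∀ i : Fin m,
      Summable (fun t => (star (φ i t) ⬝ᵥ (W t).mulVec (φ i t)).re) ∧
      ∑' t : ℕ, (star (φ i t) ⬝ᵥ (W t).mulVec (φ i t)).re ≤ α ^ 2) :
    Summable (fun t => frobNorm ((colMatrix n m φ t)ᴴ * W t * colMatrix n m φ t)) ∧
    ∑' t : ℕ, frobNorm ((colMatrix n m φ t)ᴴ * W t * colMatrix n m φ t)
      ≤ m * α ^ 2 :=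
  weighted_frobenius_summability_general n m W hW α φ hsum

end
end
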